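/- arXiv:1202.5755 — 2 statements merged into one kernel-verified Lean document; each statement's English description precedes it below -/
import Mathlib

section
/- Let A and B be ordered sets (finite multisets of reals in non-decreasing order) with A ≥ B, and let a, b be real numbers with a ≥ b. If either (i) b ≤ B[|B|] (b is at most the largest element of B) or (ii) |A| ≤ |B|, then the ordered sets A' = A ∪ {a} and B' = B ∪ {b} (obtained by inserting a into A and b into B while keeping non-decreasing order) satisfy A' ≥ B'. -/
/-- The `i`-th smallest element of a finite multiset of reals
(default `0` when out of range). -/
noncomputable def osIdx (X : Multiset ℝ) (i : ℕ) : ℝ :=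
  (X.sort (· ≤ ·)).getD i 0

/-- `osLe B A` means `A ≥ B` as ordered sets: for every index `i` valid in
both, the `i`-th smallest element of `A` is at least that of `B`. -/
def osLe (B A : Multiset ℝ) : Prop :=
  ∀ i : ℕ, i < Multiset.card A → i < Multiset.card B → osIdx B i ≤ osIdx A i

/-!
Pass to `EReal` and pad each sorted list with `⊥` on the left and `⊤` on the right. The `i`-th
entry of a sorted list `l` with `x` inserted is then the median `max l[i-1] (min x l[i])`, which is
monotone in `l[i-1]`, `x` and `l[i]`. Hence `A' ≥ B'` holds termwise, except possibly at
`i = |B| < |A|`, where `B[i] = ⊤`; there `b ≤ B[|B|-1]` makes the median for `B'` equal to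
`B[|B|-1] ≤ A[|B|-1]`.
-/

open List

section BoundedLinearOrder

variable {α : Type*} [LinearOrder α] [BoundedOrder α]

theorem List.le_getD_top_of_forall_le {c : α} {l : List α} (hc : ∀ y ∈ l, c ≤ y) (i : ℕ) :
    c ≤ l.getD i ⊤ := by
  rw [getD_eq_getElem?_getD]
  cases hy : l[i]? with
  | none => exact le_top
  | some y => exact hc y (mem_of_getElem? hy)

theorem List.getD_orderedInsert_eq_max_min {l : List α} (hl : l.Pairwise (· ≤ ·)) (x : α)
    (i : ℕ) :
    (l.orderedInsert (· ≤ ·) x).getD i ⊤ = max ((⊥ :: l).getD i ⊤) (min x (l.getD i ⊤)) := by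
  induction l generalizing i with
  | nil => cases i <;> simp
  | cons y t ih =>
    obtain ⟨y_le_t, ht⟩ := pairwise_cons.1 hl
    have y_le : ∀ j, y ≤ (y :: t).getD j ⊤ :=
      le_getD_top_of_forall_le (forall_mem_cons.2 ⟨le_rfl, y_le_t⟩)
    by_cases hxy : x ≤ y
    · rw [orderedInsert_cons_of_le _ _ hxy]
      cases i with
      | zero => simp [hxy]
      | succ j =>
        simp only [getD_cons_succ]
        exact (max_eq_left ((min_le_left _ _).trans (hxy.trans (y_le j)))).symm
    · rw [orderedInsert_cons, if_neg hxy]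
      have hyx : y ≤ x := (not_le.1 hxy).le
      cases i with
      | zero => simp [hyx]
      | succ j =>
        rw [getD_cons_succ, ih ht, getD_cons_succ, getD_cons_succ]
        cases j with
        | zero =>
          simp only [getD_cons_zero]
          rw [max_eq_right bot_le, max_eq_right (le_min hyx (le_getD_top_of_forall_le y_le_t 0))]
        | succ k => simp

theorem List.getD_orderedInsert_le_getD_orderedInsert {lA lB : List α}
    (hA : lA.Pairwise (· ≤ ·)) (hB : lB.Pairwise (· ≤ ·)) {a b : α} (hab : b ≤ a)
    (hAB : ∀ i < lB.length, lB.getD i ⊤ ≤ lA.getD i ⊤)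
    (h : b ≤ (⊥ :: lB).getD lB.length ⊤ ∨ lA.length ≤ lB.length) {i : ℕ}
    (hi : i ≤ lB.length) :
    (lB.orderedInsert (· ≤ ·) b).getD i ⊤ ≤ (lA.orderedInsert (· ≤ ·) a).getD i ⊤ := by
  rw [getD_orderedInsert_eq_max_min hB, getD_orderedInsert_eq_max_min hA]
  have h_shift : (⊥ :: lB).getD i ⊤ ≤ (⊥ :: lA).getD i ⊤ := by
    cases i with
    | zero => exact le_rfl
    | succ j => exact hAB j hi
  refine max_le (le_max_of_le_left h_shift) ?_
  rcases hi.lt_or_eq with hi | rfl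
  · exact le_max_of_le_right (min_le_min hab (hAB i hi))
  · rcases h with hb | hlen
    · exact le_max_of_le_left ((min_le_left _ _).trans (hb.trans h_shift))
    · rw [getD_eq_default _ _ hlen, min_top_right]
      exact le_max_of_le_right ((min_le_left _ _).trans hab)

end BoundedLinearOrder

theorem Multiset.sort_cons_eq_orderedInsert {α : Type*} [LinearOrder α] (x : α)
    (s : Multiset α) :
    (x ::ₘ s).sort (· ≤ ·) = (s.sort (· ≤ ·)).orderedInsert (· ≤ ·) x :=
  Quot.inductionOn s fun l => by simp [mergeSort_eq_insertionSort]

theorem coe_osIdx {X : Multiset ℝ} {i : ℕ} (hi : i < Multiset.card X) :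
    (osIdx X i : EReal) = ((X.map Real.toEReal).sort (· ≤ ·)).getD i ⊤ := by
  have hX : i < (X.sort (· ≤ ·)).length := by simpa using hi
  rw [osIdx, ← Multiset.map_sort Real.toEReal _ _ _ fun _ _ _ _ => EReal.coe_le_coe_iff.symm,
    getD_eq_getElem _ _ hX, getD_eq_getElem _ _ (by simpa using hX), getElem_map]

theorem osLe_iff_getD_le {A B : Multiset ℝ} :
    osLe B A ↔ ∀ i < Multiset.card B,
      ((B.map Real.toEReal).sort (· ≤ ·)).getD i ⊤ ≤
        ((A.map Real.toEReal).sort (· ≤ ·)).getD i ⊤ := by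
  refine forall_congr' fun i => ⟨fun h hiB => ?_, fun h hiA hiB => ?_⟩
  · rcases lt_or_ge i (Multiset.card A) with hiA | hiA
    · rw [← coe_osIdx hiA, ← coe_osIdx hiB]
      exact EReal.coe_le_coe (h hiA hiB)
    · rw [getD_eq_default ((A.map Real.toEReal).sort (· ≤ ·)) ⊤ (by simpa using hiA)]
      exact le_top
  · have := h hiB
    rwa [← coe_osIdx hiA, ← coe_osIdx hiB, EReal.coe_le_coe_iff] at this

theorem ordered_insert_pair (A B : Multiset ℝ) (a b : ℝ)
    (hab : b ≤ a) (hAB : osLe B A)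
    (h : (B ≠ 0 ∧ b ≤ osIdx B (Multiset.card B - 1)) ∨
          Multiset.card A ≤ Multiset.card B) :
    osLe (b ::ₘ B) (a ::ₘ A) := by
  rw [osLe_iff_getD_le] at hAB ⊢
  intro i hi
  simp only [Multiset.map_cons, Multiset.sort_cons_eq_orderedInsert]
  refine getD_orderedInsert_le_getD_orderedInsert (Multiset.pairwise_sort _ _)
    (Multiset.pairwise_sort _ _) (EReal.coe_le_coe hab) (by simpa using hAB) ?_
    (by simpa [Nat.lt_succ_iff] using hi)
  simp only [Multiset.length_sort, Multiset.card_map]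
  refine h.imp (fun ⟨hB0, hb⟩ => ?_) id
  obtain ⟨n, hn⟩ := Nat.exists_eq_succ_of_ne_zero (Multiset.card_pos.2 hB0).ne'
  rw [hn, Nat.succ_sub_one] at hb
  rw [hn, getD_cons_succ, ← coe_osIdx (hn ▸ n.lt_succ_self)]
  exact EReal.coe_le_coe hb
end

section
/- Let A and B be ordered sets (finite multisets of reals in non-decreasing order) with A ≥ B, and let b be a real number. If either (i) b ≤ B[|B|] (b is at most the largest element of B) or (ii) |A| ≤ |B|, then the ordered set B' = B ∪ {b} (obtained by inserting b into B while keeping non-decreasing order) satisfies A ≥ B'. -/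
/-!
Inserting `b` into the sorted list of `B` only shifts entries to the right, so each of the first
`|B|` entries can only decrease, and `A ≥ B` carries over to those indices. The one new index
`|B|` matters only when `|B| < |A|`; there the new entry is the last one, `max b B[|B|-1]`, which
under `b ≤ B[|B|-1]` is `B[|B|-1] ≤ A[|B|-1] ≤ A[|B|]`.
-/

namespace List

variable {α : Type*}

theorem orderedInsert_ne_nil (r : α → α → Prop) [DecidableRel r] (a : α) (l : List α) :
    l.orderedInsert r a ≠ [] :=
  ne_nil_of_mem ((mem_orderedInsert r).2 (Or.inl rfl))

theorem getLast_orderedInsert_of_rel (r : α → α → Prop) [DecidableRel r] {a : α} :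
    ∀ {l : List α} (hl : l ≠ []), r a (l.getLast hl) →
      (l.orderedInsert r a).getLast (orderedInsert_ne_nil r a l) = l.getLast hl
  | [c], _, hac => by simp_all
  | c :: d :: l, _, hal => by
    by_cases hac : r a c
    · simp [orderedInsert_cons_of_le _ _ hac]
    · rw [getLast_cons (cons_ne_nil d l)] at hal ⊢
      simp only [orderedInsert_of_not_le _ _ hac, getLast_cons (orderedInsert_ne_nil r a _)]
      exact getLast_orderedInsert_of_rel r (cons_ne_nil d l) hal

theorem getElem_orderedInsert_le [Preorder α] [DecidableLE α] (a : α) :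
    ∀ {l : List α}, l.SortedLE → ∀ {i : ℕ} (hi : i < l.length),
      (l.orderedInsert (· ≤ ·) a)[i]'(by simp [orderedInsert_length]; omega) ≤ l[i]
  | c :: l, hl, i, hi => by
    by_cases hac : a ≤ c
    · rcases i with _ | j
      · simp [hac]
      · simp only [orderedInsert_cons_of_le _ _ hac, getElem_cons_succ]
        exact hl.getElem_le_getElem_of_le (hj := hi) (Nat.le_succ j)
    · rcases i with _ | j
      · simp [hac]
      · simpa [hac] using
          getElem_orderedInsert_le a hl.pairwise.of_cons.sortedLE (i := j) (by simpa using hi)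

end List

namespace Multiset

variable {α : Type*} (r : α → α → Prop) [DecidableRel r] [IsTrans α r] [Std.Antisymm r]
  [Std.Total r]

theorem sort_cons_eq_orderedInsert_s1 (a : α) (s : Multiset α) :
    (a ::ₘ s).sort r = (s.sort r).orderedInsert r a :=
  Quot.inductionOn s fun l => by simp [List.mergeSort_eq_insertionSort]

theorem sort_ne_nil {s : Multiset α} (hs : s ≠ 0) : s.sort r ≠ [] := by
  rwa [Ne, ← List.length_eq_zero_iff, length_sort, card_eq_zero]

end Multiset

open Multiset

theorem osIdx_eq_getElem {X : Multiset ℝ} {i : ℕ} (hi : i < card X) :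
    osIdx X i = (X.sort (· ≤ ·))[i]'(by simpa using hi) :=
  List.getD_eq_getElem _ _ _

theorem osIdx_le_osIdx_of_le (X : Multiset ℝ) {i j : ℕ} (hij : i ≤ j) (hj : j < card X) :
    osIdx X i ≤ osIdx X j := by
  rw [osIdx_eq_getElem (hij.trans_lt hj), osIdx_eq_getElem hj]
  exact (pairwise_sort X _).sortedLE.getElem_le_getElem_of_le hij

theorem osIdx_card_sub_one {X : Multiset ℝ} (hX : X ≠ 0) :
    osIdx X (card X - 1) = (X.sort (· ≤ ·)).getLast (sort_ne_nil _ hX) := by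
  rw [List.getLast_eq_getElem, osIdx_eq_getElem (by simpa [Nat.pos_iff_ne_zero] using hX)]
  simp

theorem osIdx_cons_le (b : ℝ) {B : Multiset ℝ} {i : ℕ} (hi : i < card B) :
    osIdx (b ::ₘ B) i ≤ osIdx B i := by
  rw [osIdx_eq_getElem (by rw [card_cons]; omega), osIdx_eq_getElem hi]
  simp only [sort_cons_eq_orderedInsert_s1]
  exact List.getElem_orderedInsert_le b (pairwise_sort B _).sortedLE _

theorem osIdx_cons_card {b : ℝ} {B : Multiset ℝ} (hB : B ≠ 0)
    (hb : b ≤ osIdx B (card B - 1)) :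
    osIdx (b ::ₘ B) (card B) = osIdx B (card B - 1) := by
  rw [osIdx_card_sub_one hB] at hb ⊢
  calc osIdx (b ::ₘ B) (card B) = osIdx (b ::ₘ B) (card (b ::ₘ B) - 1) := by simp
    _ = _ := by
      rw [osIdx_card_sub_one cons_ne_zero]
      simp only [sort_cons_eq_orderedInsert_s1]
      exact List.getLast_orderedInsert_of_rel _ _ hb

theorem ordered_insert_single (A B : Multiset ℝ) (b : ℝ)
    (hAB : osLe B A)
    (h : (B ≠ 0 ∧ b ≤ osIdx B (Multiset.card B - 1)) ∨
          Multiset.card A ≤ Multiset.card B) :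
    osLe (b ::ₘ B) A := by
  intro i hiA hib
  rcases lt_or_ge i (card B) with hiB | hiB
  · exact (osIdx_cons_le b hiB).trans (hAB i hiA hiB)
  obtain rfl : i = card B := by simp at hib; omega
  obtain ⟨hB, hb⟩ : B ≠ 0 ∧ b ≤ osIdx B (card B - 1) := h.resolve_right (by omega)
  have hBpos : 0 < card B := card_pos.2 hB
  calc osIdx (b ::ₘ B) (card B) = osIdx B (card B - 1) := osIdx_cons_card hB hb
    _ ≤ osIdx A (card B - 1) := hAB _ (by omega) (by omega)
    _ ≤ osIdx A (card B) := osIdx_le_osIdx_of_le A (by omega) hiA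
end
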